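/- arXiv:1701.02886 — 5 statements merged into one kernel-verified Lean document; each statement's English description precedes it below -/
import Mathlib

section
/- For any integer d ≥ 1 and any real δ ∈ (0,1), the Chebyshev polynomial of the first kind T_d satisfies T_d(1+δ²) ≥ 2^{δd - 1}. -/
lemma T_real_cosh (n : ℤ) (x : ℝ) :
    (Polynomial.Chebyshev.T ℝ n).eval (Real.cosh x) = Real.cosh (n * x) := by
  apply Complex.ofReal_injective
  rw [Polynomial.Chebyshev.complex_ofReal_eval_T, Complex.ofReal_cosh, Complex.ofReal_cosh,
    ← Complex.cos_mul_I, ← Complex.cos_mul_I]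
  have := Polynomial.Chebyshev.T_complex_cos ((x : ℂ) * Complex.I) n
  rw [this]
  push_cast
  ring_nf

/-- For any integer `d ≥ 1` and any real `δ ∈ (0,1)`, the Chebyshev polynomial of the
first kind `T_d` satisfies `T_d(1 + δ²) ≥ 2 ^ (δ d - 1)`. -/
theorem chebyshev_lower_bound (d : ℕ) (hd : 1 ≤ d) (δ : ℝ) (hδ : δ ∈ Set.Ioo (0 : ℝ) 1) :
    (2 : ℝ) ^ (δ * d - 1) ≤ (Polynomial.Chebyshev.T ℝ d).eval (1 + δ ^ 2) := by
  obtain ⟨hδ0, hδ1⟩ := hδ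
  set t : ℝ := 1 + δ ^ 2 with ht
  have ht1 : 1 ≤ t := by nlinarith
  have hsq : Real.sqrt (t ^ 2 - 1) ^ 2 = t ^ 2 - 1 := Real.sq_sqrt (by nlinarith)
  set u : ℝ := t + Real.sqrt (t ^ 2 - 1) with hu
  have hsnn : 0 ≤ Real.sqrt (t ^ 2 - 1) := Real.sqrt_nonneg _
  have hu0 : 0 < u := by positivity
  have hsd : δ ≤ Real.sqrt (t ^ 2 - 1) := by
    rw [← Real.sqrt_sq hδ0.le]
    apply Real.sqrt_le_sqrt
    nlinarith
  have huδ : 1 + δ ≤ u := by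
    have : 1 + δ ≤ t + δ := by nlinarith
    linarith
  set x : ℝ := Real.log u with hx
  have hexp : Real.exp x = u := Real.exp_log hu0
  have hcosh : Real.cosh x = t := by
    have hinv : u⁻¹ = t - Real.sqrt (t ^ 2 - 1) := by
      apply inv_eq_of_mul_eq_one_right
      nlinarith
    rw [Real.cosh_eq, Real.exp_neg, hexp, hinv]
    ring
  have key : (Polynomial.Chebyshev.T ℝ d).eval t = Real.cosh (d * x) := by
    rw [← hcosh, T_real_cosh d x]
    norm_num
  rw [key]
  have h1 : Real.exp ((d : ℝ) * x) / 2 ≤ Real.cosh ((d : ℝ) * x) := by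
    rw [Real.cosh_eq]
    have := (Real.exp_pos (-((d : ℝ) * x))).le
    linarith
  have h2 : u ^ d = Real.exp ((d : ℝ) * x) := by
    rw [← hexp, ← Real.exp_nat_mul]
  have h2δ : (2 : ℝ) ^ δ ≤ 1 + δ := by
    have := rpow_one_add_le_one_add_mul_self (s := 1) (by norm_num) hδ0.le hδ1.le
    norm_num at this
    linarith
  have h3 : (2 : ℝ) ^ (δ * d - 1) = ((2 : ℝ) ^ δ) ^ d / 2 := by
    rw [Real.rpow_sub (by norm_num), Real.rpow_one, Real.rpow_mul (by norm_num),
      Real.rpow_natCast]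
  rw [h3]
  have h4 : ((2 : ℝ) ^ δ) ^ d ≤ (1 + δ) ^ d :=
    pow_le_pow_left₀ (Real.rpow_nonneg (by norm_num) δ) h2δ d
  have h5 : (1 + δ) ^ d ≤ u ^ d :=
    pow_le_pow_left₀ (by linarith) huδ d
  calc ((2 : ℝ) ^ δ) ^ d / 2 ≤ u ^ d / 2 := by linarith
    _ = Real.exp ((d : ℝ) * x) / 2 := by rw [h2]
    _ ≤ Real.cosh ((d : ℝ) * x) := h1
end

section
/- For every integer d ≥ 1 and p ≥ 1, the binomial coefficient C(p+d, d) satisfies C(p+d,d) ≤ d^p (e/p)^p exp(p²/d). -/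
/-!
`C(p+d, p) ≤ (p+d)^p / p!`; the term `p^p / p!` of the series of `e^p` gives `1/p! ≤ (e/p)^p`,
and `1 + x ≤ e^x` gives `(d+p)^p = d^p (1 + p/d)^p ≤ d^p e^{p²/d}`.
-/

open Nat Real

theorem Real.inv_factorial_le_exp_one_div_pow (n : ℕ) : ((n ! : ℝ))⁻¹ ≤ (exp 1 / n) ^ n := by
  rcases n.eq_zero_or_pos with rfl | hn
  · simp
  rw [div_pow, exp_one_pow, le_div_iff₀ (by positivity), inv_mul_le_iff₀ (by positivity)]
  exact (div_le_iff₀' (by positivity)).1 (pow_div_factorial_le_exp (n : ℝ) n.cast_nonneg n)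

theorem Real.add_le_mul_exp_div {d : ℝ} (hd : 0 < d) (x : ℝ) : d + x ≤ d * exp (x / d) :=
  calc d + x = d * (x / d + 1) := by field_simp; ring
    _ ≤ d * exp (x / d) := mul_le_mul_of_nonneg_left (add_one_le_exp _) hd.le

theorem Real.add_pow_le_pow_mul_exp {d x : ℝ} (hd : 0 < d) (hx : 0 ≤ d + x) (n : ℕ) :
    (d + x) ^ n ≤ d ^ n * exp (n * x / d) :=
  calc (d + x) ^ n ≤ (d * exp (x / d)) ^ n := pow_le_pow_left₀ hx (add_le_mul_exp_div hd x) n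
    _ = d ^ n * exp (n * x / d) := by rw [mul_pow, ← exp_nat_mul, mul_div_assoc]

theorem choose_le_bound_general (p d : ℕ) (hd : 1 ≤ d) :
    ((p + d).choose d : ℝ) ≤
      (d : ℝ) ^ p * (Real.exp 1 / p) ^ p * Real.exp ((p : ℝ) ^ 2 / d) := by
  have hd0 : (0 : ℝ) < d := by exact_mod_cast hd
  calc ((p + d).choose d : ℝ) = ((p + d).choose p : ℝ) := by rw [Nat.choose_symm_add]
    _ ≤ ((p + d : ℕ) : ℝ) ^ p / p ! := Nat.choose_le_pow_div p (p + d)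
    _ = ((d : ℝ) + p) ^ p * (p ! : ℝ)⁻¹ := by push_cast; ring
    _ ≤ (d ^ p * exp (p * p / d)) * (exp 1 / p) ^ p := by
        gcongr
        exacts [add_pow_le_pow_mul_exp hd0 (by positivity) p, inv_factorial_le_exp_one_div_pow p]
    _ = (d : ℝ) ^ p * (exp 1 / p) ^ p * exp ((p : ℝ) ^ 2 / d) := by rw [sq]; ring

/-- For every integer `d ≥ 1` and `p ≥ 1`, the binomial coefficient `C(p+d, d)` satisfies
`C(p+d,d) ≤ d^p (e/p)^p exp(p²/d)`. -/
theorem choose_le_bound (p d : ℕ) (hp : 1 ≤ p) (hd : 1 ≤ d) :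
    ((p + d).choose d : ℝ) ≤
      (d : ℝ) ^ p * (Real.exp 1 / p) ^ p * Real.exp ((p : ℝ) ^ 2 / d) :=
  choose_le_bound_general p d hd
end

section
/- For every natural number n ≥ 1, √(2πn)·n^n·e^{-n}·exp(1/(12n+1)) ≤ n! ≤ √(2πn)·n^n·e^{-n}·exp(1/(12n)). -/
/-!
Let `s n = n! / (√(2n) (n/e)^n)` be Mathlib's Stirling sequence, which tends to `√π`. With
`r = (2n+1)⁻²`, the step `log s n - log s (n+1)` equals `∑_{k ≥ 1} r^k / (2k+1)`. Because
`3 ≤ 2k+1 ≤ 3^k`, this sum lies between the geometric sums `∑ (r/3)^k` and `∑ r^k / 3`, and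
these are at least `1/(12n+1) - 1/(12(n+1)+1)` and at most `1/(12n) - 1/(12(n+1))`. Hence
`log s n - 1/(12n)` increases and `log s n - 1/(12n+1)` decreases, both to `log √π`.
-/

open Real Filter Topology Stirling

lemma le_add_of_tendsto_of_sub_succ_le {u g : ℕ → ℝ} {L : ℝ} (hu : Tendsto u atTop (𝓝 L))
    (hg : Tendsto g atTop (𝓝 0)) (h : ∀ k, u k - u (k + 1) ≤ g k - g (k + 1)) (k : ℕ) :
    u k ≤ L + g k := by
  have hmono : Monotone fun k => u k - g k := monotone_nat_of_le_succ fun k => by linarith [h k]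
  linarith [hmono.ge_of_tendsto (by simpa using hu.sub hg) k]

lemma add_le_of_tendsto_of_le_sub_succ {u g : ℕ → ℝ} {L : ℝ} (hu : Tendsto u atTop (𝓝 L))
    (hg : Tendsto g atTop (𝓝 0)) (h : ∀ k, g k - g (k + 1) ≤ u k - u (k + 1)) (k : ℕ) :
    L + g k ≤ u k := by
  have := le_add_of_tendsto_of_sub_succ_le hu.neg (by simpa using hg.neg)
    (fun k => by linarith [h k]) k
  linarith

lemma tendsto_one_div_mul_add_atTop_nhds_zero_nat {a : ℝ} (ha : 0 < a) (b : ℝ) :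
    Tendsto (fun k : ℕ => 1 / (a * k + b)) atTop (𝓝 0) := by
  simp only [one_div]
  exact tendsto_inv_atTop_zero.comp <| tendsto_atTop_add_const_right _ b <|
    tendsto_natCast_atTop_atTop.const_mul_atTop ha

lemma tendsto_log_stirlingSeq_succ :
    Tendsto (fun k : ℕ => log (stirlingSeq (k + 1))) atTop (𝓝 (log √π)) :=
  (tendsto_stirlingSeq_sqrt_pi.comp (tendsto_add_atTop_nat 1)).log (by positivity)

lemma log_stirlingSeq_sdiff_le_sub {n : ℕ} (hn : n ≠ 0) :
    log (stirlingSeq n) - log (stirlingSeq (n + 1)) ≤ 1 / (12 * n) - 1 / (12 * (n + 1)) := by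
  have : (0 : ℝ) < n := by positivity
  convert log_stirlingSeq_sdiff_le n using 1
  field_simp
  ring

lemma two_mul_add_one_le_three_pow (k : ℕ) : (2 * k + 1 : ℝ) ≤ 3 ^ k := by
  have := one_add_mul_le_pow (a := (2 : ℝ)) (by norm_num) k
  norm_num at this
  linarith

lemma one_div_three_mul_sq_sub_one_le_log_stirlingSeq_sdiff {n : ℕ} (hn : n ≠ 0) :
    1 / (3 * (2 * n + 1) ^ 2 - 1) ≤ log (stirlingSeq n) - log (stirlingSeq (n + 1)) := by
  obtain ⟨m, rfl⟩ := Nat.exists_eq_add_one_of_ne_zero hn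
  set r : ℝ := (1 / (2 * ↑(m + 1) + 1)) ^ 2
  have hr1 : r ≤ 1 :=
    pow_le_one₀ (by positivity) (div_le_one_of_le₀ (by simp; positivity) (by positivity))
  have hgeom :
      HasSum (fun k : ℕ => (r / 3) ^ (k + 1)) (1 / (3 * (2 * ↑(m + 1) + 1) ^ 2 - 1)) := by
    have := (hasSum_geometric_of_lt_one (by positivity) (by linarith : r / 3 < 1)).mul_left
      (r / 3)
    simp_rw [← pow_succ'] at this
    rwa [show r / 3 * (1 - r / 3)⁻¹ = 1 / (3 * (2 * ↑(m + 1) + 1) ^ 2 - 1) by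
      simp only [r]; field_simp] at this
  refine hasSum_le (fun k => ?_) hgeom (log_stirlingSeq_sdiff_hasSum m)
  rw [div_pow, one_div_mul_eq_div]
  gcongr
  exact_mod_cast two_mul_add_one_le_three_pow (k + 1)

lemma sub_le_log_stirlingSeq_sdiff {n : ℕ} (hn : n ≠ 0) :
    1 / (12 * n + 1) - 1 / (12 * (n + 1) + 1) ≤
      log (stirlingSeq n) - log (stirlingSeq (n + 1)) := by
  refine le_trans ?_ (one_div_three_mul_sq_sub_one_le_log_stirlingSeq_sdiff hn)
  have hn1 : (1 : ℝ) ≤ n := by exact_mod_cast Nat.one_le_iff_ne_zero.mpr hn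
  rw [div_sub_div _ _ (by positivity) (by positivity),
    div_le_div_iff₀ (by positivity) (by nlinarith)]
  nlinarith

lemma log_stirlingSeq_le_log_sqrt_pi_add {n : ℕ} (hn : n ≠ 0) :
    log (stirlingSeq n) ≤ log √π + 1 / (12 * n) := by
  obtain ⟨k, rfl⟩ := Nat.exists_eq_add_one_of_ne_zero hn
  have hg : Tendsto (fun k : ℕ => 1 / (12 * ((k + 1 : ℕ) : ℝ))) atTop (𝓝 0) :=
    (tendsto_one_div_mul_add_atTop_nhds_zero_nat (a := 12) (by norm_num) 12).congr fun k => by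
      push_cast; ring
  exact le_add_of_tendsto_of_sub_succ_le tendsto_log_stirlingSeq_succ hg
    (fun k => by exact_mod_cast log_stirlingSeq_sdiff_le_sub k.succ_ne_zero) k

lemma log_sqrt_pi_add_le_log_stirlingSeq {n : ℕ} (hn : n ≠ 0) :
    log √π + 1 / (12 * n + 1) ≤ log (stirlingSeq n) := by
  obtain ⟨k, rfl⟩ := Nat.exists_eq_add_one_of_ne_zero hn
  have hg : Tendsto (fun k : ℕ => 1 / (12 * ((k + 1 : ℕ) : ℝ) + 1)) atTop (𝓝 0) :=
    (tendsto_one_div_mul_add_atTop_nhds_zero_nat (a := 12) (by norm_num) 13).congr fun k => by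
      push_cast; ring
  exact add_le_of_tendsto_of_le_sub_succ tendsto_log_stirlingSeq_succ hg
    (fun k => by exact_mod_cast sub_le_log_stirlingSeq_sdiff k.succ_ne_zero) k

lemma stirlingSeq_pos {n : ℕ} (hn : n ≠ 0) : 0 < stirlingSeq n :=
  (sqrt_pos.2 pi_pos).trans_le (sqrt_pi_le_stirlingSeq hn)

lemma stirlingSeq_le_sqrt_pi_mul_exp {n : ℕ} (hn : n ≠ 0) :
    stirlingSeq n ≤ √π * exp (1 / (12 * n)) := by
  rw [← log_le_log_iff (stirlingSeq_pos hn) (by positivity),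
    log_mul (by positivity) (exp_ne_zero _), log_exp]
  exact log_stirlingSeq_le_log_sqrt_pi_add hn

lemma sqrt_pi_mul_exp_le_stirlingSeq {n : ℕ} (hn : n ≠ 0) :
    √π * exp (1 / (12 * n + 1)) ≤ stirlingSeq n := by
  rw [← log_le_log_iff (by positivity) (stirlingSeq_pos hn),
    log_mul (by positivity) (exp_ne_zero _), log_exp]
  exact log_sqrt_pi_add_le_log_stirlingSeq hn

lemma sqrt_two_pi_mul_pow_mul_exp_neg (n : ℕ) :
    √(2 * π * n) * (n : ℝ) ^ n * exp (-n) = √π * (√(2 * n) * (n / exp 1) ^ n) := by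
  rw [div_pow, ← exp_nat_mul, mul_one, exp_neg, show (2 * π * n : ℝ) = π * (2 * n) by ring,
    sqrt_mul pi_pos.le]
  ring

/-- Robbins' sharpening of Stirling's formula: for every natural number `n ≥ 1`,
`√(2πn)·n^n·e^{-n}·exp(1/(12n+1)) ≤ n! ≤ √(2πn)·n^n·e^{-n}·exp(1/(12n))`. -/
theorem robbins_factorial_bounds (n : ℕ) (hn : 1 ≤ n) :
    Real.sqrt (2 * π * n) * (n : ℝ) ^ n * Real.exp (-(n : ℝ)) *
        Real.exp (1 / (12 * (n : ℝ) + 1)) ≤ (n.factorial : ℝ) ∧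
      (n.factorial : ℝ) ≤
        Real.sqrt (2 * π * n) * (n : ℝ) ^ n * Real.exp (-(n : ℝ)) *
          Real.exp (1 / (12 * (n : ℝ))) := by
  have hn0 : n ≠ 0 := Nat.one_le_iff_ne_zero.mp hn
  have hD : 0 < √(2 * n) * (n / exp 1) ^ n := by
    have : (0 : ℝ) < n := by exact_mod_cast hn
    positivity
  have hfac : (n.factorial : ℝ) = stirlingSeq n * (√(2 * n) * (n / exp 1) ^ n) :=
    (div_mul_cancel₀ _ hD.ne').symm
  rw [sqrt_two_pi_mul_pow_mul_exp_neg, hfac, mul_right_comm, mul_right_comm _ _ (exp _)]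
  exact ⟨by gcongr; exact sqrt_pi_mul_exp_le_stirlingSeq hn0,
    by gcongr; exact stirlingSeq_le_sqrt_pi_mul_exp hn0⟩
end

section
/- Let d ≥ 1 and δ ∈ (0,1), and let x be a point of the closed Euclidean unit ball B ⊆ ℝ^p. Then there exists a polynomial q in p variables of degree at most 2d such that q(x) = 1, |q(z)| ≤ 1 for all z ∈ B, and |q(z)| ≤ 2^{1-δd} for all z ∈ B with ‖z - x‖ ≥ δ. -/
open MeasureTheory

lemma needle_natDegree_T_le : ∀ n : ℕ, (Polynomial.Chebyshev.T ℝ (n : ℤ)).natDegree ≤ n := by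
  intro n
  induction n using Nat.strong_induction_on with
  | _ n ih =>
    match n with
    | 0 => simp
    | 1 => simp [Polynomial.natDegree_X_le]
    | (n + 2) =>
      have h : ((n + 2 : ℕ) : ℤ) = (n : ℤ) + 2 := by push_cast; ring
      rw [h, Polynomial.Chebyshev.T_add_two]
      refine le_trans (Polynomial.natDegree_sub_le _ _) (max_le ?_ ?_)
      · refine le_trans (Polynomial.natDegree_mul_le) ?_
        have h1 : (2 * Polynomial.X : Polynomial ℝ).natDegree ≤ 1 := by
          refine le_trans (Polynomial.natDegree_mul_le) ?_
          simp [Polynomial.natDegree_X_le]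
        have h2 : (Polynomial.Chebyshev.T ℝ ((n : ℤ) + 1)).natDegree ≤ n + 1 := by
          have := ih (n + 1) (by omega)
          simpa [Nat.cast_add] using this
        omega
      · have := ih n (by omega)
        omega

lemma needle_T_real_cosh (n : ℤ) (t : ℝ) :
    (Polynomial.Chebyshev.T ℝ n).eval (Real.cosh t) = Real.cosh (n * t) := by
  have h := Polynomial.Chebyshev.T_complex_cos (t * Complex.I) n
  rw [Complex.cos_mul_I] at h
  have h2 : ((n : ℂ)) * (t * Complex.I) = ((n : ℝ) * t : ℝ) * Complex.I := by
    push_cast; ring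
  rw [h2, Complex.cos_mul_I] at h
  exact_mod_cast h

lemma needle_abs_T_le_one (n : ℤ) {t : ℝ} (h1 : -1 ≤ t) (h2 : t ≤ 1) :
    |(Polynomial.Chebyshev.T ℝ n).eval t| ≤ 1 := by
  have := Polynomial.Chebyshev.T_real_cos (Real.arccos t) n
  rw [Real.cos_arccos h1 h2] at this
  rw [this]
  exact Real.abs_cos_le_one _

lemma needle_cosh_surj {y : ℝ} (hy : 1 ≤ y) : ∃ t : ℝ, 0 ≤ t ∧ Real.cosh t = y := by
  have hc : ContinuousOn Real.cosh (Set.Icc 0 y) := Real.continuous_cosh.continuousOn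
  have h0 : (0 : ℝ) ≤ y := le_trans zero_le_one hy
  have hyc : y ≤ Real.cosh y := by
    have h1 : 0 < y := lt_of_lt_of_le one_pos hy
    have h2 : y < Real.sinh y := Real.self_lt_sinh_iff.2 h1
    have h3 : Real.sinh y < Real.cosh y := Real.sinh_lt_cosh y
    linarith
  have hmem : y ∈ Set.Icc (Real.cosh 0) (Real.cosh y) := ⟨by simpa using hy, hyc⟩
  obtain ⟨t, ht, htc⟩ := intermediate_value_Icc h0 hc hmem
  exact ⟨t, ht.1, htc⟩

lemma needle_two_rpow_le (δ : ℝ) (h0 : 0 ≤ δ) (h1 : δ ≤ 1) : (2:ℝ) ^ δ ≤ 1 + δ := by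
  have hconv := convexOn_exp.2 (Set.mem_univ (0:ℝ)) (Set.mem_univ (Real.log 2))
    (by linarith : (0:ℝ) ≤ 1 - δ) h0 (by ring)
  simp only [smul_eq_mul, mul_zero, zero_add, Real.exp_zero, Real.exp_log two_pos] at hconv
  rw [Real.rpow_def_of_pos two_pos]
  calc Real.exp (Real.log 2 * δ) = Real.exp ((1-δ) * 0 + δ * Real.log 2) := by ring_nf
    _ ≤ (1-δ) * 1 + δ * 2 := by simpa using hconv
    _ = 1 + δ := by ring

set_option maxHeartbeats 2000000 in
/-- The needle polynomial: for `d ≥ 1`, `δ ∈ (0,1)` and a point `x` of the closed Euclidean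
unit ball `B ⊆ ℝ^p`, there exists a polynomial `q` in `p` variables of degree at most `2d`
such that `q(x) = 1`, `|q| ≤ 1` on `B`, and `|q| ≤ 2^{1-δd}` on `B \ B_δ(x)`. -/
theorem needle_polynomial (p d : ℕ) (hd : 1 ≤ d) (δ : ℝ) (hδ : δ ∈ Set.Ioo (0 : ℝ) 1)
    (x : EuclideanSpace ℝ (Fin p)) (hx : x ∈ Metric.closedBall (0 : EuclideanSpace ℝ (Fin p)) 1) :
    ∃ q : MvPolynomial (Fin p) ℝ, q.totalDegree ≤ 2 * d ∧
      MvPolynomial.eval (x : Fin p → ℝ) q = 1 ∧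
      (∀ z ∈ Metric.closedBall (0 : EuclideanSpace ℝ (Fin p)) 1,
        |MvPolynomial.eval (z : Fin p → ℝ) q| ≤ 1) ∧
      (∀ z ∈ Metric.closedBall (0 : EuclideanSpace ℝ (Fin p)) 1,
        δ ≤ ‖z - x‖ → |MvPolynomial.eval (z : Fin p → ℝ) q| ≤ (2 : ℝ) ^ (1 - δ * d)) := by
  obtain ⟨hδ0, hδ1⟩ := hδ
  set y : ℝ := 1 + δ^2/2 with hy
  have hy1 : (1:ℝ) ≤ y := by rw [hy]; nlinarith
  obtain ⟨θ, hθ0, hθ⟩ := needle_cosh_surj hy1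
  have hθlb : Real.log (1 + δ) ≤ θ := by
    have hlog0 : 0 ≤ Real.log (1 + δ) := Real.log_nonneg (by linarith)
    have h1δ : (0:ℝ) < 1 + δ := by linarith
    have hcc : Real.cosh (Real.log (1 + δ)) ≤ Real.cosh θ := by
      rw [hθ, Real.cosh_eq, Real.exp_log h1δ, Real.exp_neg, Real.exp_log h1δ]
      have hinv : (1+δ) * (1+δ)⁻¹ = 1 := mul_inv_cancel₀ (ne_of_gt h1δ)
      have hinvpos : (0:ℝ) < (1+δ)⁻¹ := by positivity
      rw [hy]
      nlinarith [hinv, hinvpos, hδ0, sq_nonneg δ]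
    have := Real.cosh_le_cosh.1 hcc
    rwa [abs_of_nonneg hlog0, abs_of_nonneg hθ0] at this
  set Tval : ℝ := (Polynomial.Chebyshev.T ℝ (d:ℤ)).eval y with hTval
  have hTval_cosh : Tval = Real.cosh (d * θ) := by
    rw [hTval, ← hθ, needle_T_real_cosh]; norm_num
  have hTval1 : (1:ℝ) ≤ Tval := hTval_cosh ▸ Real.one_le_cosh _
  have hTval0 : (0:ℝ) < Tval := lt_of_lt_of_le one_pos hTval1
  have hTne : Tval ≠ 0 := ne_of_gt hTval0
  have hTlb : (2:ℝ) ^ (δ * d - 1) ≤ Tval := by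
    have h1 : Real.exp ((d:ℝ) * θ) / 2 ≤ Tval := by
      rw [hTval_cosh, Real.cosh_eq]
      have := Real.exp_pos (-((d:ℝ) * θ))
      linarith
    have h2 : ((1 + δ) ^ d : ℝ) ≤ Real.exp ((d:ℝ) * θ) := by
      have hmono : Real.exp ((d:ℝ) * Real.log (1+δ)) ≤ Real.exp ((d:ℝ) * θ) :=
        Real.exp_le_exp.2 (mul_le_mul_of_nonneg_left hθlb (by positivity))
      calc ((1 + δ) ^ d : ℝ) = Real.exp (Real.log (1+δ)) ^ d := by
            rw [Real.exp_log (by linarith)]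
        _ = Real.exp ((d:ℝ) * Real.log (1+δ)) := by rw [← Real.exp_nat_mul]
        _ ≤ _ := hmono
    have h3 : ((2:ℝ) ^ δ) ^ d ≤ ((1 + δ) ^ d : ℝ) :=
      pow_le_pow_left₀ (by positivity) (needle_two_rpow_le δ hδ0.le hδ1.le) d
    have h4 : ((2:ℝ) ^ δ) ^ d = (2:ℝ) ^ (δ * d) := by
      rw [← Real.rpow_natCast ((2:ℝ)^δ) d, ← Real.rpow_mul (by norm_num)]
    have h5 : (2:ℝ) ^ (δ * d - 1) = (2:ℝ) ^ (δ * d) / 2 := by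
      rw [Real.rpow_sub two_pos, Real.rpow_one]
    rw [h5, ← h4]
    calc ((2:ℝ)^δ)^d / 2 ≤ ((1+δ)^d : ℝ) / 2 := by linarith
      _ ≤ Real.exp ((d:ℝ)*θ) / 2 := by linarith
      _ ≤ Tval := h1
  set r : MvPolynomial (Fin p) ℝ :=
    MvPolynomial.C y - MvPolynomial.C 2⁻¹ *
      ∑ i : Fin p, (MvPolynomial.X i - MvPolynomial.C (x i))^2 with hr
  set q : MvPolynomial (Fin p) ℝ :=
    MvPolynomial.C Tval⁻¹ * Polynomial.aeval r (Polynomial.Chebyshev.T ℝ (d:ℤ)) with hq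
  have key : ∀ (w : Fin p → ℝ) (s : MvPolynomial (Fin p) ℝ),
      MvPolynomial.eval w (Polynomial.aeval s (Polynomial.Chebyshev.T ℝ (d:ℤ)))
        = (Polynomial.Chebyshev.T ℝ (d:ℤ)).eval (MvPolynomial.eval w s) := by
    intro w s
    have h2 : ∀ u : MvPolynomial (Fin p) ℝ,
        MvPolynomial.aeval w u = MvPolynomial.eval w u := fun u => by
      rw [← MvPolynomial.coe_aeval_eq_eval]; rfl
    calc MvPolynomial.eval w (Polynomial.aeval s (Polynomial.Chebyshev.T ℝ (d:ℤ)))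
        = MvPolynomial.aeval w (Polynomial.aeval s (Polynomial.Chebyshev.T ℝ (d:ℤ))) := (h2 _).symm
      _ = Polynomial.aeval (MvPolynomial.aeval w s) (Polynomial.Chebyshev.T ℝ (d:ℤ)) :=
          (Polynomial.aeval_algHom_apply (MvPolynomial.aeval w) s _).symm
      _ = (Polynomial.Chebyshev.T ℝ (d:ℤ)).eval (MvPolynomial.eval w s) := by
          rw [h2, ← Polynomial.coe_aeval_eq_eval]
  have heval : ∀ z : EuclideanSpace ℝ (Fin p),
      MvPolynomial.eval (z : Fin p → ℝ) q =
        Tval⁻¹ * (Polynomial.Chebyshev.T ℝ (d:ℤ)).eval (y - ‖z - x‖^2 / 2) := by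
    intro z
    have hnorm : ‖z - x‖^2 = ∑ i : Fin p, ((z : Fin p → ℝ) i - (x : Fin p → ℝ) i)^2 := by
      rw [EuclideanSpace.norm_eq, Real.sq_sqrt (by positivity)]
      congr 1; ext i; rw [Real.norm_eq_abs, sq_abs]; rfl
    have hrz : MvPolynomial.eval (z : Fin p → ℝ) r = y - ‖z - x‖^2 / 2 := by
      rw [hr, hnorm]
      simp [div_eq_mul_inv, mul_comm]
    rw [hq, map_mul, MvPolynomial.eval_C, key, hrz]
  refine ⟨q, ?_, ?_, ?_, ?_⟩
  · -- degree bound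
    have hrdeg : r.totalDegree ≤ 2 := by
      rw [hr]
      have hsum : (∑ i : Fin p, (MvPolynomial.X i - MvPolynomial.C (x i))^2
          : MvPolynomial (Fin p) ℝ).totalDegree ≤ 2 := by
        refine le_trans (MvPolynomial.totalDegree_finset_sum _ _) ?_
        refine Finset.sup_le fun i _ => ?_
        refine le_trans (MvPolynomial.totalDegree_pow _ _) ?_
        have hXC : (MvPolynomial.X i - MvPolynomial.C (x i)
            : MvPolynomial (Fin p) ℝ).totalDegree ≤ 1 := by
          rw [sub_eq_add_neg, ← map_neg]
          refine le_trans (MvPolynomial.totalDegree_add _ _) (max_le ?_ ?_)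
          · exact le_of_eq (MvPolynomial.totalDegree_X i)
          · simp [MvPolynomial.totalDegree_C]
        omega
      rw [sub_eq_add_neg, neg_mul_eq_neg_mul, ← map_neg]
      refine le_trans (MvPolynomial.totalDegree_add _ _) (max_le ?_ ?_)
      · simp [MvPolynomial.totalDegree_C]
      · refine le_trans (MvPolynomial.totalDegree_mul _ _) ?_
        simpa [MvPolynomial.totalDegree_C] using hsum
    have haeval : (Polynomial.aeval r (Polynomial.Chebyshev.T ℝ (d:ℤ))).totalDegree ≤ 2*d := by
      rw [Polynomial.aeval_eq_sum_range]
      refine le_trans (MvPolynomial.totalDegree_finset_sum _ _) ?_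
      refine Finset.sup_le fun i hi => ?_
      refine le_trans (MvPolynomial.totalDegree_smul_le _ _) ?_
      refine le_trans (MvPolynomial.totalDegree_pow _ _) ?_
      have hi' : i ≤ (Polynomial.Chebyshev.T ℝ (d:ℤ)).natDegree :=
        Nat.lt_succ_iff.1 (Finset.mem_range.1 hi)
      have hnd := needle_natDegree_T_le d
      calc i * r.totalDegree ≤ i * 2 := Nat.mul_le_mul_left _ hrdeg
        _ ≤ d * 2 := Nat.mul_le_mul_right _ (le_trans hi' hnd)
        _ = 2 * d := Nat.mul_comm _ _
    rw [hq]
    refine le_trans (MvPolynomial.totalDegree_mul _ _) ?_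
    simpa [MvPolynomial.totalDegree_C] using haeval
  · -- value at x
    rw [heval x]
    simp only [sub_self, norm_zero, ne_eq, OfNat.ofNat_ne_zero, not_false_eq_true,
      zero_pow, zero_div, sub_zero]
    rw [← hTval, inv_mul_cancel₀ hTne]
  · -- bound on ball
    intro z hz
    rw [heval z]
    have hz1 : ‖z‖ ≤ 1 := mem_closedBall_zero_iff.1 hz
    have hx1 : ‖x‖ ≤ 1 := mem_closedBall_zero_iff.1 hx
    have hzx : ‖z - x‖ ≤ 2 := le_trans (norm_sub_le _ _) (by linarith)
    have hzx0 : (0:ℝ) ≤ ‖z - x‖ := norm_nonneg _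
    set t : ℝ := y - ‖z - x‖^2 / 2 with ht
    have hsq4 : ‖z - x‖^2 ≤ 4 := by
      have := pow_le_pow_left₀ hzx0 hzx 2
      norm_num at this; linarith
    have htlb : -1 ≤ t := by
      rw [ht, hy]; nlinarith [hδ0, sq_nonneg δ]
    rw [abs_mul, abs_of_pos (inv_pos.2 hTval0)]
    rcases le_or_gt t 1 with h | h
    · have := needle_abs_T_le_one (d:ℤ) htlb h
      calc Tval⁻¹ * |(Polynomial.Chebyshev.T ℝ (d:ℤ)).eval t| ≤ Tval⁻¹ * 1 :=
            mul_le_mul_of_nonneg_left this (by positivity)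
        _ ≤ 1 := by rw [mul_one]; exact inv_le_one_of_one_le₀ hTval1
    · have hty : t ≤ y := by rw [ht]; nlinarith
      obtain ⟨φ, hφ0, hφ⟩ := needle_cosh_surj h.le
      have hφθ : φ ≤ θ := by
        have : Real.cosh φ ≤ Real.cosh θ := by rw [hφ, hθ]; exact hty
        have := Real.cosh_le_cosh.1 this
        rwa [abs_of_nonneg hφ0, abs_of_nonneg hθ0] at this
      have hevalt : (Polynomial.Chebyshev.T ℝ (d:ℤ)).eval t = Real.cosh (d * φ) := by
        rw [← hφ, needle_T_real_cosh]; norm_num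
      have hle : Real.cosh ((d:ℝ) * φ) ≤ Tval := by
        rw [hTval_cosh]
        refine Real.cosh_le_cosh.2 ?_
        rw [abs_of_nonneg (by positivity), abs_of_nonneg (by positivity)]
        exact mul_le_mul_of_nonneg_left hφθ (by positivity)
      rw [hevalt, abs_of_pos (Real.cosh_pos _)]
      rw [← inv_mul_cancel₀ hTne]
      exact mul_le_mul_of_nonneg_left hle (by positivity)
  · -- decay bound
    intro z hz hsep
    rw [heval z]
    have hz1 : ‖z‖ ≤ 1 := mem_closedBall_zero_iff.1 hz
    have hx1 : ‖x‖ ≤ 1 := mem_closedBall_zero_iff.1 hx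
    have hzx : ‖z - x‖ ≤ 2 := le_trans (norm_sub_le _ _) (by linarith)
    have hzx0 : (0:ℝ) ≤ ‖z - x‖ := norm_nonneg _
    set t : ℝ := y - ‖z - x‖^2 / 2 with ht
    have hsq4 : ‖z - x‖^2 ≤ 4 := by
      have := pow_le_pow_left₀ hzx0 hzx 2
      norm_num at this; linarith
    have htlb : -1 ≤ t := by
      rw [ht, hy]; nlinarith [hδ0, sq_nonneg δ]
    have hsqδ : δ^2 ≤ ‖z - x‖^2 := pow_le_pow_left₀ hδ0.le hsep 2
    have htub : t ≤ 1 := by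
      rw [ht, hy]; linarith
    have habs := needle_abs_T_le_one (d:ℤ) htlb htub
    rw [abs_mul, abs_of_pos (inv_pos.2 hTval0)]
    have h1 : Tval⁻¹ * |(Polynomial.Chebyshev.T ℝ (d:ℤ)).eval t| ≤ Tval⁻¹ :=
      by calc _ ≤ Tval⁻¹ * 1 := mul_le_mul_of_nonneg_left habs (by positivity)
        _ = Tval⁻¹ := mul_one _
    have h2 : Tval⁻¹ ≤ ((2:ℝ) ^ (δ * d - 1))⁻¹ :=
      inv_anti₀ (by positivity) hTlb
    have h3 : ((2:ℝ) ^ (δ * d - 1))⁻¹ = (2:ℝ) ^ (1 - δ * d) := by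
      rw [← Real.rpow_neg (by norm_num : (0:ℝ) ≤ 2), neg_sub]
    linarith [h1, h2, h3.le, h3.ge]
end

section
/- For the univariate polynomial r(t) = T_d(1+δ² - t²)/T_d(1+δ²) with δ ∈ (0,1) and d ≥ 1: r(0) = 1; |r(t)| ≤ 1 for all t ∈ [-1,1]; and |r(t)| ≤ 1/T_d(1+δ²) whenever δ ≤ |t| ≤ 1. -/
open Polynomial Polynomial.Chebyshev

lemma cheb_U_ge_one (n : ℕ) (x : ℝ) (hx : 1 ≤ x) :
    1 ≤ (U ℝ n).eval x ∧ (U ℝ n).eval x ≤ (U ℝ (n + 1)).eval x := by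
  induction n with
  | zero => simp [U_zero, U_one]; linarith
  | succ m ih =>
    obtain ⟨h1, h2⟩ := ih
    constructor
    · push_cast
      linarith
    · push_cast
      have : ((m : ℤ) + 1 + 1) = (m : ℤ) + 2 := by ring
      rw [this, U_add_two]
      simp only [eval_sub, eval_mul, eval_ofNat, eval_X]
      nlinarith

lemma cheb_T_eval_one (n : ℤ) : (T ℝ n).eval 1 = 1 := by
  have := T_real_cos 0 n
  simpa using this

lemma cheb_T_monotone (n : ℕ) : MonotoneOn (fun x => (T ℝ n).eval x) (Set.Ici (1 : ℝ)) := by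
  apply monotoneOn_of_deriv_nonneg (convex_Ici 1)
  · exact (Polynomial.continuous _).continuousOn
  · exact (Polynomial.differentiable _).differentiableOn
  · intro x hx
    rw [interior_Ici] at hx
    rw [Polynomial.deriv, T_derivative_eq_U]
    cases n with
    | zero => simp
    | succ m =>
      rw [show (((m + 1 : ℕ)) : ℤ) = (m : ℤ) + 1 by push_cast; ring,
        show ((m : ℤ) + 1 - 1) = (m : ℤ) by ring]
      simp only [eval_mul, eval_intCast]
      have h1 := (cheb_U_ge_one m x hx.le).1
      have hm : (0:ℝ) ≤ (m:ℝ) := Nat.cast_nonneg m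
      push_cast
      nlinarith

lemma cheb_T_ge_one (n : ℕ) (x : ℝ) (hx : 1 ≤ x) : 1 ≤ (T ℝ n).eval x := by
  have := cheb_T_monotone n (Set.self_mem_Ici) (Set.mem_Ici.2 hx) hx
  simpa [cheb_T_eval_one] using this

lemma cheb_T_abs_le_one (n : ℤ) (s : ℝ) (hs : s ∈ Set.Icc (-1 : ℝ) 1) :
    |(T ℝ n).eval s| ≤ 1 := by
  rw [← Real.cos_arccos hs.1 hs.2, T_real_cos]
  exact Real.abs_cos_le_one _

/-- Properties of the univariate needle polynomial
`r(t) = T_d(1+δ²-t²)/T_d(1+δ²)` for `δ ∈ (0,1)` and `d ≥ 1`: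
`r(0) = 1`, `|r(t)| ≤ 1` on `[-1,1]`, and `|r(t)| ≤ 1/T_d(1+δ²)` for `δ ≤ |t| ≤ 1`. -/
theorem needle_poly_univariate (d : ℕ) (hd : 1 ≤ d) (δ : ℝ) (hδ : δ ∈ Set.Ioo (0 : ℝ) 1)
    (r : ℝ → ℝ)
    (hr : ∀ t, r t = (Polynomial.Chebyshev.T ℝ d).eval (1 + δ ^ 2 - t ^ 2) /
      (Polynomial.Chebyshev.T ℝ d).eval (1 + δ ^ 2)) :
    r 0 = 1 ∧
      (∀ t ∈ Set.Icc (-1 : ℝ) 1, |r t| ≤ 1) ∧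
      (∀ t : ℝ, δ ≤ |t| → |t| ≤ 1 →
        |r t| ≤ 1 / (Polynomial.Chebyshev.T ℝ d).eval (1 + δ ^ 2)) := by
  obtain ⟨hδ0, hδ1⟩ := hδ
  have hden1 : 1 ≤ (T ℝ d).eval (1 + δ ^ 2) := cheb_T_ge_one d _ (by nlinarith)
  have hden0 : 0 < (T ℝ d).eval (1 + δ ^ 2) := by linarith
  refine ⟨?_, ?_, ?_⟩
  · rw [hr]
    simp [div_self hden0.ne']
  · intro t ht
    rw [hr, abs_div, abs_of_pos hden0, div_le_one hden0]
    have ht2 : t ^ 2 ≤ 1 := by nlinarith [ht.1, ht.2, sq_nonneg (t - 1), sq_nonneg (t + 1)]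
    set s := 1 + δ ^ 2 - t ^ 2 with hs
    rcases le_or_gt s 1 with h1 | h1
    · have : |(T ℝ d).eval s| ≤ 1 := cheb_T_abs_le_one d s ⟨by nlinarith [sq_nonneg t], h1⟩
      linarith
    · have hm := cheb_T_monotone d (Set.mem_Ici.2 h1.le)
        (Set.mem_Ici.2 (by nlinarith : (1:ℝ) ≤ 1 + δ ^ 2)) (by nlinarith [sq_nonneg t])
      have hg := cheb_T_ge_one d s h1.le
      rw [abs_of_pos (by linarith)]
      exact hm
  · intro t hδt ht1
    rw [hr, abs_div, abs_of_pos hden0, div_le_div_iff_of_pos_right hden0]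
    have ht2 : t ^ 2 ≤ 1 := by
      have := abs_nonneg t
      nlinarith [sq_abs t]
    have hδ2 : δ ^ 2 ≤ t ^ 2 := by nlinarith [sq_abs t]
    exact cheb_T_abs_le_one d _ ⟨by nlinarith, by nlinarith⟩
end
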